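/- In dimension d = 1, the correction term V vanishes: for every smooth 2π-periodic function φ : 𝕋¹ → ℝ one has ∫_{𝕋¹} φ''(x) (φ'(x))² dx = 0. Consequently, for every smooth function f on 𝕋¹ × ℝ rapidly decaying in v, [[T,U],U](f) = 2 m(f) U(f); explicitly, ∫_{𝕋¹} ρ(f)(x) E(f)(x)² dx = m(f) ∫_{𝕋¹} E(f)(x)² dx. -/

import Mathlib

open MeasureTheory Real

noncomputable section

/-- A smooth function on `𝕋¹ × ℝ` (presented as a `2π`-periodic-in-`x` function on
`ℝ × ℝ`) which is rapidly decaying in `v` together with all its derivatives. -/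
def GoodPhase1 (f : ℝ → ℝ → ℝ) : Prop :=
  ContDiff ℝ (⊤ : ℕ∞) (fun p : ℝ × ℝ => f p.1 p.2) ∧
  (∀ x v : ℝ, f (x + 2 * π) v = f x v) ∧
  (∀ n k : ℕ, ∃ C : ℝ, ∀ x v : ℝ,
    |v| ^ k * ‖iteratedFDeriv ℝ n (fun p : ℝ × ℝ => f p.1 p.2) (x, v)‖ ≤ C)

/-- Density `ρ(f)(x) = ∫ f(x,v) dv`. -/
def dens1 (f : ℝ → ℝ → ℝ) : ℝ → ℝ := fun x => ∫ v, f x v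

/-- Total mass `m(f) = (2π)⁻¹ ∫∫ f dx dv`. -/
def mTot1 (f : ℝ → ℝ → ℝ) : ℝ := (2 * π)⁻¹ * ∫ x in (0 : ℝ)..(2 * π), ∫ v, f x v

/-- `φ` is the electric potential of `f` in dimension 1: smooth, `2π`-periodic,
zero mean, with `−φ'' = ρ(f) − m(f)`. -/
def IsElectricPotential1 (f : ℝ → ℝ → ℝ) (φ : ℝ → ℝ) : Prop :=
  ContDiff ℝ (⊤ : ℕ∞) φ ∧ Function.Periodic φ (2 * π) ∧ (∫ x in (0 : ℝ)..(2 * π), φ x) = 0 ∧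
  ∀ x, -deriv (deriv φ) x = dens1 f x - mTot1 f

/-- in dimension `d = 1` the correction term `V` vanishes — for every smooth
`2π`-periodic `ψ : 𝕋¹ → ℝ` one has `∫ ψ'' (ψ')² dx = 0` — and consequently
`[[T,U],U](f) = 2 m(f) U(f)`, i.e. `∫ ρ(f) E(f)² dx = m(f) ∫ E(f)² dx`
(with `E(f) = −φ(f)'`, so `E(f)² = (φ(f)')²`). -/
theorem stmt9 (f : ℝ → ℝ → ℝ) (hf : GoodPhase1 f)
    (φf : ℝ → ℝ) (hφf : IsElectricPotential1 f φf) :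
    (∀ ψ : ℝ → ℝ, ContDiff ℝ (⊤ : ℕ∞) ψ → Function.Periodic ψ (2 * π) →
      (∫ x in (0 : ℝ)..(2 * π), deriv (deriv ψ) x * (deriv ψ x) ^ 2) = 0) ∧
    (∫ x in (0 : ℝ)..(2 * π), dens1 f x * (deriv φf x) ^ 2)
      = mTot1 f * ∫ x in (0 : ℝ)..(2 * π), (deriv φf x) ^ 2 := by

  have key : ∀ ψ : ℝ → ℝ, ContDiff ℝ (⊤ : ℕ∞) ψ → Function.Periodic ψ (2 * π) →
      (∫ x in (0 : ℝ)..(2 * π), deriv (deriv ψ) x * (deriv ψ x) ^ 2) = 0 := by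
    intro ψ hψ hper
    have h1 : ContDiff ℝ (⊤ : ℕ∞) (deriv ψ) :=
      (contDiff_infty_iff_deriv.mp (hψ.of_le (by simp))).2
    have h2 : ContDiff ℝ (⊤ : ℕ∞) (deriv (deriv ψ)) :=
      (contDiff_infty_iff_deriv.mp h1).2
    have hd : ∀ x ∈ Set.uIcc (0 : ℝ) (2 * π), HasDerivAt (fun x => deriv ψ x ^ 3)
        (3 * deriv ψ x ^ 2 * deriv (deriv ψ) x) x := by
      intro x _
      have := ((h1.differentiable (by simp) x).hasDerivAt).pow 3
      simpa [Pi.pow_def] using this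
    have hint : IntervalIntegrable (fun x => 3 * deriv ψ x ^ 2 * deriv (deriv ψ) x)
        MeasureTheory.volume 0 (2 * π) := by
      exact (((continuous_const.mul ((h1.continuous).pow 2)).mul
        h2.continuous)).intervalIntegrable _ _
    have h3 : (∫ x in (0 : ℝ)..(2 * π), 3 * deriv ψ x ^ 2 * deriv (deriv ψ) x)
        = deriv ψ (2 * π) ^ 3 - deriv ψ 0 ^ 3 :=
      intervalIntegral.integral_eq_sub_of_hasDerivAt hd hint
    have hper' : deriv ψ (2 * π) = deriv ψ 0 := by
      have hfun : (fun y => ψ (y + 2 * π)) = ψ := funext fun y => hper y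
      have h := deriv_comp_add_const (f := ψ) (a := 2 * π) (x := (0 : ℝ))
      rw [hfun] at h
      simpa using h.symm
    have h4 : (∫ x in (0 : ℝ)..(2 * π), 3 * deriv ψ x ^ 2 * deriv (deriv ψ) x) = 0 := by
      rw [h3, hper']; ring
    have h5 : (∫ x in (0 : ℝ)..(2 * π), deriv (deriv ψ) x * deriv ψ x ^ 2)
        = (1/3) * ∫ x in (0 : ℝ)..(2 * π), 3 * deriv ψ x ^ 2 * deriv (deriv ψ) x := by
      rw [← intervalIntegral.integral_const_mul]
      apply intervalIntegral.integral_congr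
      intro x _
      ring
    rw [h5, h4, mul_zero]
  refine ⟨key, ?_⟩
  obtain ⟨hφ, hperφ, _, heq⟩ := hφf
  have h1 : ContDiff ℝ (⊤ : ℕ∞) (deriv φf) :=
    (contDiff_infty_iff_deriv.mp (hφ.of_le (by simp))).2
  have h2 : ContDiff ℝ (⊤ : ℕ∞) (deriv (deriv φf)) :=
    (contDiff_infty_iff_deriv.mp h1).2
  have hrho : ∀ x, dens1 f x = mTot1 f - deriv (deriv φf) x := by
    intro x; have := heq x; linarith
  have hcongr : (∫ x in (0 : ℝ)..(2 * π), dens1 f x * (deriv φf x) ^ 2)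
      = ∫ x in (0 : ℝ)..(2 * π),
        (mTot1 f * (deriv φf x) ^ 2 - deriv (deriv φf) x * (deriv φf x) ^ 2) := by
    apply intervalIntegral.integral_congr
    intro x _
    simp only [hrho]; ring
  have hi1 : IntervalIntegrable (fun x => mTot1 f * (deriv φf x) ^ 2)
      MeasureTheory.volume 0 (2 * π) :=
    (continuous_const.mul ((h1.continuous).pow 2)).intervalIntegrable _ _
  have hi2 : IntervalIntegrable (fun x => deriv (deriv φf) x * (deriv φf x) ^ 2)
      MeasureTheory.volume 0 (2 * π) :=
    (h2.continuous.mul ((h1.continuous).pow 2)).intervalIntegrable _ _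
  rw [hcongr, intervalIntegral.integral_sub hi1 hi2, key φf hφ hperφ, sub_zero,
    intervalIntegral.integral_const_mul]
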